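/- Let ζ_p = e^{2πi/p} be a primitive p-th root of unity. The assignment σ(X_1) = ζ_p X_1, σ(g_i) = g_i for 1 ≤ i ≤ n−1, σ(t_j) = t_j for 1 ≤ j ≤ n extends to an algebra automorphism σ of Ŷ_{r,n}(q) of order p, so that {1, σ,…,σ^{p−1}} ≅ ℤ/pℤ acts on Ŷ_{r,n}(q); moreover the fixed-point subalgebra of this ℤ/pℤ-action is exactly Ŷ^p_{r,n}(q). -/

import Mathlib

open scoped BigOperators

namespace AYHpaper

/-! ### The affine Yokonuma–Hecke algebra by generators and relations -/

inductive Gen (n : ℕ) : Type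
  | t : Fin n → Gen n
  | g : Fin (n - 1) → Gen n
  | X : Gen n
  | Xinv : Gen n

abbrev FA (n : ℕ) : Type := FreeAlgebra ℂ (Gen n)

noncomputable def ft {n : ℕ} (j : Fin n) : FA n := FreeAlgebra.ι ℂ (Gen.t j)
noncomputable def fg {n : ℕ} (i : Fin (n - 1)) : FA n := FreeAlgebra.ι ℂ (Gen.g i)
noncomputable def fX {n : ℕ} : FA n := FreeAlgebra.ι ℂ Gen.X
noncomputable def fXinv {n : ℕ} : FA n := FreeAlgebra.ι ℂ Gen.Xinv

/-- The simple transposition `s_i` (0-based) acting on indices. -/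
def sAct {n : ℕ} (i : Fin (n - 1)) (j : Fin n) : Fin n :=
  if j.1 = i.1 then ⟨i.1 + 1, by have := i.2; omega⟩
  else if j.1 = i.1 + 1 then ⟨i.1, by have := i.2; omega⟩
  else j

def loFin {n : ℕ} (i : Fin (n - 1)) : Fin n := ⟨i.1, by have := i.2; omega⟩
def hiFin {n : ℕ} (i : Fin (n - 1)) : Fin n := ⟨i.1 + 1, by have := i.2; omega⟩

/-- The element `e_i = (1/r) ∑_{s=0}^{r-1} t_i^s t_{i+1}^{-s}` (in the free algebra,
with `t^{-s}` written `t^{(r-s) % r}`, using `t^r = 1` in the quotient). -/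
noncomputable def fe (r : ℕ) {n : ℕ} (i : Fin (n - 1)) : FA n :=
  (r : ℂ)⁻¹ • ∑ s ∈ Finset.range r, ft (loFin i) ^ s * ft (hiFin i) ^ ((r - s) % r)

/-- The defining relations of the affine Yokonuma–Hecke algebra `Ŷ_{r,n}(q)`. -/
inductive Rel (r n : ℕ) (q : ℂ) : FA n → FA n → Prop
  | gg {i j : Fin (n - 1)} (h : i.1 + 2 ≤ j.1 ∨ j.1 + 2 ≤ i.1) :
      Rel r n q (fg i * fg j) (fg j * fg i)
  | braid {i j : Fin (n - 1)} (h : j.1 = i.1 + 1) :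
      Rel r n q (fg i * fg j * fg i) (fg j * fg i * fg j)
  | tt (i j : Fin n) : Rel r n q (ft i * ft j) (ft j * ft i)
  | gt (i : Fin (n - 1)) (j : Fin n) : Rel r n q (fg i * ft j) (ft (sAct i j) * fg i)
  | tpow (i : Fin n) : Rel r n q (ft i ^ r) 1
  | gsq (i : Fin (n - 1)) :
      Rel r n q (fg i ^ 2) (1 + (q - q⁻¹) • (fe r i * fg i))
  | XXinv : Rel r n q (fX * fXinv) 1
  | XinvX : Rel r n q (fXinv * fX) 1
  | gXgX (i : Fin (n - 1)) (h : i.1 = 0) :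
      Rel r n q (fg i * fX * fg i * fX) (fX * fg i * fX * fg i)
  | gX (i : Fin (n - 1)) (h : 1 ≤ i.1) : Rel r n q (fg i * fX) (fX * fg i)
  | tX (j : Fin n) : Rel r n q (ft j * fX) (fX * ft j)

/-- The affine Yokonuma–Hecke algebra `Ŷ_{r,n}(q)` over `ℂ`. -/
abbrev AYH (r n : ℕ) (q : ℂ) : Type := RingQuot (Rel r n q)

noncomputable def ayhπ (r n : ℕ) (q : ℂ) : FA n →ₐ[ℂ] AYH r n q :=
  RingQuot.mkAlgHom ℂ (Rel r n q)

noncomputable def tEl (r n : ℕ) (q : ℂ) (j : Fin n) : AYH r n q := ayhπ r n q (ft j)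
noncomputable def gEl (r n : ℕ) (q : ℂ) (i : Fin (n - 1)) : AYH r n q := ayhπ r n q (fg i)
noncomputable def X1El (r n : ℕ) (q : ℂ) : AYH r n q := ayhπ r n q fX
noncomputable def X1invEl (r n : ℕ) (q : ℂ) : AYH r n q := ayhπ r n q fXinv
noncomputable def eEl (r n : ℕ) (q : ℂ) (i : Fin (n - 1)) : AYH r n q := ayhπ r n q (fe r i)

/-- `g_i⁻¹ = g_i - (q - q⁻¹) e_i`. -/
noncomputable def gInvEl (r n : ℕ) (q : ℂ) (i : Fin (n - 1)) : AYH r n q :=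
  gEl r n q i - (q - q⁻¹) • eEl r n q i

/-- `X_1, X_2, …` defined by `X_{i+1} = g_i X_i g_i` (0-based recursion). -/
noncomputable def Xseq (r n : ℕ) (q : ℂ) : ℕ → AYH r n q
  | 0 => X1El r n q
  | (k + 1) =>
      if h : k < n - 1 then gEl r n q ⟨k, h⟩ * Xseq r n q k * gEl r n q ⟨k, h⟩
      else Xseq r n q k

noncomputable def XEl (r n : ℕ) (q : ℂ) (j : Fin n) : AYH r n q := Xseq r n q j.1

noncomputable def XinvSeq (r n : ℕ) (q : ℂ) : ℕ → AYH r n q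
  | 0 => X1invEl r n q
  | (k + 1) =>
      if h : k < n - 1 then gInvEl r n q ⟨k, h⟩ * XinvSeq r n q k * gInvEl r n q ⟨k, h⟩
      else XinvSeq r n q k

noncomputable def XinvEl (r n : ℕ) (q : ℂ) (j : Fin n) : AYH r n q := XinvSeq r n q j.1

/-- The fixed primitive `r`-th root of unity `ζ = e^{2πi/r}`; `ζ_k = ζ^{k-1}`. -/
noncomputable def ζr (r : ℕ) : ℂ := Complex.exp (2 * Real.pi * Complex.I / r)

/-! ### Representations -/

/-- A representation of an algebra `A` on `M` is simple (irreducible). -/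
def SimpleRep {A M : Type} [Semiring A] [AddCommGroup M] [Module ℂ M] [Algebra ℂ A]
    (ρ : A →ₐ[ℂ] Module.End ℂ M) : Prop :=
  (∃ v : M, v ≠ 0) ∧
    ∀ W : Submodule ℂ M, (∀ a : A, ∀ w ∈ W, ρ a w ∈ W) → W = ⊥ ∨ W = ⊤

/-- A representation of `Ŷ_{r,n}(q)` is calibrated if it admits a basis of simultaneous
eigenvectors for all the `X_i` (with nonzero eigenvalues) and all the `t_i`
(with eigenvalues among `ζ_1, …, ζ_r`). -/
def CalibratedRep {M : Type} [AddCommGroup M] [Module ℂ M] (r n : ℕ) (q : ℂ)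
    (ρ : AYH r n q →ₐ[ℂ] Module.End ℂ M) : Prop :=
  ∃ (ι : Type) (b : Module.Basis ι ℂ M), ∀ idx : ι,
    (∀ j : Fin n, ∃ ν : ℂ, ν ≠ 0 ∧ ρ (XEl r n q j) (b idx) = ν • b idx) ∧
    (∀ j : Fin n, ∃ k : Fin r, ρ (tEl r n q j) (b idx) = (ζr r) ^ (k : ℕ) • b idx)

/-! ### `r`-skew shapes, boxes and their numbering -/

structure PreShape (r : ℕ) : Type where
  outer : Fin r → YoungDiagram
  inner : Fin r → YoungDiagram
  le : ∀ h, (inner h).cells ⊆ (outer h).cells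

def PreShape.boxes {r : ℕ} (S : PreShape r) : Finset (Fin r × ℕ × ℕ) :=
  Finset.univ.biUnion fun h => ((S.outer h).cells \ (S.inner h).cells).image fun c => (h, c)

/-- An `r`-skew shape with `n` boxes. -/
def SkewShape (r n : ℕ) : Type := {S : PreShape r // S.boxes.card = n}

/-- The boxes of an `r`-skew shape. -/
abbrev Box {r n : ℕ} (S : SkewShape r n) : Type := ↥S.1.boxes

def comp {r n : ℕ} {S : SkewShape r n} (b : Box S) : Fin r := b.1.1
def row {r n : ℕ} {S : SkewShape r n} (b : Box S) : ℕ := b.1.2.1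
def col {r n : ℕ} {S : SkewShape r n} (b : Box S) : ℕ := b.1.2.2
def diag {r n : ℕ} {S : SkewShape r n} (b : Box S) : ℤ := (col b : ℤ) - (row b : ℤ)

/-- The key ordering boxes along major diagonals from southwest to northeast,
component by component. -/
def keyB {r n : ℕ} {S : SkewShape r n} (b : Box S) : Lex (Fin r × Lex (ℤ × ℕ)) :=
  toLex (comp b, toLex (diag b, col b))

theorem keyB_inj {r n : ℕ} {S : SkewShape r n} :
    Function.Injective (keyB (S := S)) := by
  rintro ⟨⟨h₁, i₁, j₁⟩, m₁⟩ ⟨⟨h₂, i₂, j₂⟩, m₂⟩ e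
  have e' : (h₁, ((j₁ : ℤ) - (i₁ : ℤ), j₁)) = (h₂, ((j₂ : ℤ) - (i₂ : ℤ), j₂)) := by
    exact e
  obtain ⟨e1, e2⟩ := Prod.mk.injEq .. ▸ e'
  obtain ⟨e3, e4⟩ := Prod.mk.injEq .. ▸ e2
  apply Subtype.ext
  have : i₁ = i₂ := by omega
  simp_all

noncomputable def boxOrder {r n : ℕ} (S : SkewShape r n) : LinearOrder (Box S) :=
  LinearOrder.lift' keyB keyB_inj

/-- The enumeration `box_1, …, box_n` of the boxes (0-based: `box k` for `k : Fin n`). -/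
noncomputable def boxEnum {r n : ℕ} (S : SkewShape r n) : Fin n ≃ Box S :=
  letI := boxOrder S
  (monoEquivOfFin (Box S) (by rw [Fintype.card_coe]; exact S.2)).toEquiv

/-- The index of a box in the enumeration. -/
noncomputable def boxIdx {r n : ℕ} {S : SkewShape r n} (b : Box S) : Fin n :=
  (boxEnum S).symm b

/-! ### Placed skew shapes -/

/-- A placed `r`-skew shape `(c, λ/μ)`. -/
structure Placed (r n : ℕ) (q : ℂ) : Type where
  shape : SkewShape r n
  c : Box shape → ℂ
  strip : ∀ b, 0 ≤ (c b).im ∧ (c b).im < 2 * Real.pi / Real.log (‖q‖ ^ 2)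
  mono : ∀ b b' : Box shape, boxIdx b < boxIdx b' → ∀ m : ℤ, c b' - c b = (m : ℂ) → 0 ≤ m
  adj_iff : ∀ b b' : Box shape, comp b = comp b' →
      (c b' = c b + 1 ↔ diag b' = diag b + 1)
  same_iff : ∀ b b' : Box shape, comp b = comp b' → (c b' = c b ↔ diag b' = diag b)

/-! ### Standard tableaux -/

/-- A filling (bijective labelling) of the boxes by `1, …, n` is standard if entries
increase from left to right along rows and from top to bottom down columns. -/
def IsStd {r n : ℕ} {S : SkewShape r n} (e : Box S ≃ Fin n) : Prop :=
  (∀ b b' : Box S, comp b = comp b' → row b' = row b → col b' = col b + 1 → e b < e b') ∧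
  (∀ b b' : Box S, comp b = comp b' → col b' = col b → row b' = row b + 1 → e b < e b')

/-- The set of standard tableaux of shape `λ/μ`. -/
def Tab {r n : ℕ} (S : SkewShape r n) : Type := {e : Box S ≃ Fin n // IsStd e}

/-- The underlying vector space of `Ŷ^{(c,λ/μ)}`, with basis `{w_T}` indexed by
standard tableaux. -/
abbrev VS {r n : ℕ} (S : SkewShape r n) : Type := Tab S →₀ ℂ

noncomputable def wT {r n : ℕ} {S : SkewShape r n} (T : Tab S) : VS S :=
  Finsupp.single T 1

/-- `w_{s_i T}`: the basis vector of the tableau obtained from `T` by exchanging the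
entries `i` and `i+1`, or `0` if that filling is not standard. -/
noncomputable def wSwap {r n : ℕ} {S : SkewShape r n} (T : Tab S) (i : Fin (n - 1)) :
    VS S := by
  classical
  exact if h : IsStd (T.1.trans (Equiv.swap (loFin i) (hiFin i)))
    then Finsupp.single ⟨T.1.trans (Equiv.swap (loFin i) (hiFin i)), h⟩ 1 else 0

/-- `q^{2z} = e^{2 z log q}`. -/
noncomputable def qc (q z : ℂ) : ℂ := Complex.exp (2 * z * Complex.log q)

/-- The coefficient `q^{2c(T|i+1)}(q - q⁻¹) / (q^{2c(T|i+1)} - q^{2c(T|i)})`. -/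
noncomputable def gCoeff1 {r n : ℕ} {q : ℂ} (P : Placed r n q) (T : Tab P.shape)
    (i : Fin (n - 1)) : ℂ :=
  qc q (P.c (T.1.symm (hiFin i))) * (q - q⁻¹) /
    (qc q (P.c (T.1.symm (hiFin i))) - qc q (P.c (T.1.symm (loFin i))))

/-- The coefficient `(q^{2c(T|i+1)+1} - q^{2c(T|i)-1}) / (q^{2c(T|i+1)} - q^{2c(T|i)})`. -/
noncomputable def gCoeff2 {r n : ℕ} {q : ℂ} (P : Placed r n q) (T : Tab P.shape)
    (i : Fin (n - 1)) : ℂ :=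
  (q * qc q (P.c (T.1.symm (hiFin i))) - q⁻¹ * qc q (P.c (T.1.symm (loFin i)))) /
    (qc q (P.c (T.1.symm (hiFin i))) - qc q (P.c (T.1.symm (loFin i))))

/-- The defining formulas of the calibrated module `Ŷ^{(c,λ/μ)}` for a representation
`ρ` of `Ŷ_{r,n}(q)` on the span of the `w_T`. -/
structure IsYModel {r n : ℕ} {q : ℂ} (P : Placed r n q)
    (ρ : AYH r n q →ₐ[ℂ] Module.End ℂ (VS P.shape)) : Prop where
  ht : ∀ (T : Tab P.shape) (j : Fin n),
      ρ (tEl r n q j) (wT T) = (ζr r) ^ ((comp (T.1.symm j) : ℕ)) • wT T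
  hX : ∀ (T : Tab P.shape) (j : Fin n),
      ρ (XEl r n q j) (wT T) = qc q (P.c (T.1.symm j)) • wT T
  hg_ne : ∀ (T : Tab P.shape) (i : Fin (n - 1)),
      comp (T.1.symm (loFin i)) ≠ comp (T.1.symm (hiFin i)) →
      ρ (gEl r n q i) (wT T) = wSwap T i
  hg_eq : ∀ (T : Tab P.shape) (i : Fin (n - 1)),
      comp (T.1.symm (loFin i)) = comp (T.1.symm (hiFin i)) →
      ρ (gEl r n q i) (wT T) = gCoeff1 P T i • wT T + gCoeff2 P T i • wSwap T i

end AYHpaper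

namespace AYHpaper

variable (r n : ℕ) (q : ℂ)

/-- `X_j^m` for `m : ℤ` in `Ŷ_{r,n}(q)`. -/
noncomputable def XAzpow (j : Fin n) (m : ℤ) : AYH r n q :=
  if 0 ≤ m then XEl r n q j ^ m.toNat else XinvEl r n q j ^ (-m).toNat

/-- The monomial `X^λ = X_1^{λ_1}⋯X_n^{λ_n}` for `λ ∈ L = ⊕ ℤε_i`. -/
noncomputable def Xlam (lam : Fin n → ℤ) : AYH r n q :=
  (List.ofFn fun j : Fin n => XAzpow r n q j (lam j)).prod

/-- The sublattice `L_p = Q + ∑ pℤε_i` (where `Q = ∑_{i≥2} ℤ(ε_i - ε_{i-1})`)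
consists exactly of the `λ ∈ ℤ^n` with `p ∣ ∑ λ_i`. -/
def memLp (p : ℕ) (lam : Fin n → ℤ) : Prop := (p : ℤ) ∣ ∑ i, lam i

/-- The subalgebra `Ŷ^p_{r,n}(q)` of `Ŷ_{r,n}(q)`: it is spanned by the elements
`t_1^{a_1}⋯t_n^{a_n} X^λ g_w` with `λ ∈ L_p`, i.e. generated by the `X^λ` with
`λ ∈ L_p`, the `g_i` and the `t_j`. -/
noncomputable def YpSub (p : ℕ) : Subalgebra ℂ (AYH r n q) :=
  Algebra.adjoin ℂ
    ({x | ∃ lam : Fin n → ℤ, memLp n p lam ∧ x = Xlam r n q lam} ∪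
      {x | ∃ i, x = gEl r n q i} ∪ {x | ∃ j, x = tEl r n q j})

/-- `ζ_p = e^{2πi/p}`. -/
noncomputable def ζp (p : ℕ) : ℂ := Complex.exp (2 * Real.pi * Complex.I / p)

end AYHpaper


/-!
For `u ∈ ℂˣ`, sending `X_1 ↦ u X_1` and fixing the `g_i`, `t_j` respects the defining
relations, which are homogeneous in `X_1`; this gives a homomorphism `u ↦ σ_u` from `ℂˣ` to
the automorphism group. It is injective because `X_1 ≠ 0` (it acts by `1` in the one-dimensional
representation `t_j ↦ 1`, `g_i ↦ q`), so `σ_ζ` has order `p`. Every `X^λ` is a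
`σ_u`-eigenvector with eigenvalue `u^{∑ λ_i}`, so `σ_ζ` fixes `Ŷ^p_{r,n}(q)`.

Conversely, conjugation by `X_1^{±1}` preserves `Ŷ^p_{r,n}(q)`: the only generator not
commuting with `X_1` is `g_1`, and `X_1⁻¹ g_1 X_1 = (X_1⁻¹ X_2) g_1⁻¹`,
`X_1 g_1⁻¹ X_1⁻¹ = (X_1 X_2⁻¹) g_1`. Hence `Ŷ_{r,n}(q) = ∑_m X_1^m Ŷ^p_{r,n}(q)`, a sum of
`σ_ζ`-eigenspaces for the eigenvalues `ζ^m`. Averaging over `⟨σ_ζ⟩` kills the summands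
with `p ∤ m` and fixes the others, which lie in `Ŷ^p_{r,n}(q)`; a fixed point equals its own
average.
-/

section Generic

theorem Module.End.pow_apply_of_apply_eq_smul {K M : Type*} [CommSemiring K] [AddCommMonoid M]
    [Module K M] {f : Module.End K M} {c : K} {v : M} (h : f v = c • v) (k : ℕ) :
    (f ^ k) v = c ^ k • v := by
  induction k with
  | zero => simp
  | succ k ih => rw [pow_succ, Module.End.mul_apply, h, map_smul, ih, smul_smul, pow_succ']

theorem Submodule.mem_of_apply_eq_self_of_span_eigenvectors {K M : Type*} [Field K]
    [AddCommGroup M] [Module K M] (σ : Module.End K M) {p : ℕ} (hp : (p : K) ≠ 0)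
    {S : Submodule K M} {T : Set M} (hT : Submodule.span K T = ⊤)
    (hTσ : ∀ t ∈ T, ∃ c : K, σ t = c • t ∧ c ^ p = 1 ∧ (c = 1 → t ∈ S))
    {a : M} (ha : σ a = a) : a ∈ S := by
  set π : Module.End K M := (p : K)⁻¹ • ∑ k ∈ Finset.range p, σ ^ k
  have hπ : ∀ {c : K} {v : M}, σ v = c • v →
      π v = ((p : K)⁻¹ * ∑ k ∈ Finset.range p, c ^ k) • v := fun h => by
    simp only [π, LinearMap.smul_apply, LinearMap.sum_apply,
      Module.End.pow_apply_of_apply_eq_smul h, Finset.sum_smul, mul_smul]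
  have hπT : T ⊆ S.comap π := by
    intro t ht
    obtain ⟨c, hσt, hcp, hcS⟩ := hTσ t ht
    rw [SetLike.mem_coe, Submodule.mem_comap, hπ hσt]
    by_cases hc : c = 1
    · simpa [hc, hp] using hcS hc
    · rw [geom_sum_eq hc, hcp, sub_self, zero_div, mul_zero, zero_smul]
      exact S.zero_mem
  have hπa : π a = a := by
    rw [hπ (c := 1) (by rw [one_smul, ha])]
    simp [hp]
  have haT : a ∈ Submodule.span K T := hT ▸ Submodule.mem_top
  simpa [hπa] using Submodule.span_le.mpr hπT haT

theorem Units.span_zpow_mul_eq_top {K A : Type*} [CommSemiring K] [Semiring A] [Algebra K A]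
    (x : Aˣ) {B : Subalgebra K A} (hB : ∀ b ∈ B, ↑x⁻¹ * b * ↑x ∈ B)
    (hB' : ∀ b ∈ B, ↑x * b * ↑x⁻¹ ∈ B)
    (hgen : Algebra.adjoin K ((B : Set A) ∪ {(x : A), ((x⁻¹ : Aˣ) : A)}) = ⊤) :
    Submodule.span K {y | ∃ m : ℤ, ∃ b ∈ B, y = ↑(x ^ m) * b} = ⊤ := by
  set M := Submodule.span K {y | ∃ m : ℤ, ∃ b ∈ B, y = ↑(x ^ m) * b}
  have hright : ∀ a : A, ∀ v ∈ M, v * a ∈ M := by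
    intro a
    have ha : a ∈ Algebra.adjoin K ((B : Set A) ∪ {(x : A), ((x⁻¹ : Aˣ) : A)}) :=
      hgen ▸ Algebra.mem_top
    induction ha using Algebra.adjoin_induction with
    | mem a ha =>
      suffices h : ∀ m : ℤ, ∀ b ∈ B, ↑(x ^ m) * b * a ∈ M from fun v hv =>
        (Submodule.span_le (p := M.comap (LinearMap.mulRight K a))).mpr
          (by rintro _ ⟨m, b, hb, rfl⟩; exact h m b hb) hv
      intro m b hb
      rcases ha with ha | rfl | rfl
      · exact Submodule.subset_span ⟨m, b * a, mul_mem hb ha, by rw [mul_assoc]⟩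
      · exact Submodule.subset_span ⟨m + 1, _, hB b hb, by simp [zpow_add_one, mul_assoc]⟩
      · exact Submodule.subset_span ⟨m - 1, _, hB' b hb, by simp [zpow_sub_one, mul_assoc]⟩
    | algebraMap c =>
      intro v hv
      rw [← Algebra.commutes, ← Algebra.smul_def]
      exact M.smul_mem c hv
    | add a b _ _ iha ihb =>
      intro v hv
      rw [mul_add]
      exact add_mem (iha v hv) (ihb v hv)
    | mul a b _ _ iha ihb =>
      intro v hv
      rw [← mul_assoc]
      exact ihb _ (iha v hv)
  refine eq_top_iff.2 fun a _ => ?_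
  simpa using hright a 1 (Submodule.subset_span ⟨0, 1, B.one_mem, by simp⟩)

theorem Algebra.conj_mem_adjoin {K A : Type*} [CommSemiring K] [Semiring A] [Algebra K A]
    (x : Aˣ) {s : Set A} (hs : ∀ a ∈ s, ↑x * a * ↑x⁻¹ ∈ Algebra.adjoin K s) {b : A}
    (hb : b ∈ Algebra.adjoin K s) : ↑x * b * ↑x⁻¹ ∈ Algebra.adjoin K s := by
  set φ := (MulSemiringAction.toAlgEquiv K A (ConjAct.toConjAct x)).toAlgHom
  have hφ : (Algebra.adjoin K s).map φ ≤ Algebra.adjoin K s := by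
    rw [AlgHom.map_adjoin]
    exact Algebra.adjoin_le (by rintro _ ⟨a, ha, rfl⟩; exact hs a ha)
  exact hφ ⟨b, hb, rfl⟩

theorem AlgHom.map_units_zpow_of_map_eq_smul {K A : Type*} [CommSemiring K] [Semiring A]
    [Algebra K A] (f : A →ₐ[K] A) {x : Aˣ} {c : Kˣ} (h : f x = (c : K) • (x : A))
    (m : ℤ) :
    f ↑(x ^ m) = ((c ^ m : Kˣ) : K) • ↑(x ^ m) := by
  set C := Units.map (algebraMap K A : K →* A)
  have hx : Units.map (f : A →* A) x = C c * x := Units.ext (by simp [C, h, Algebra.smul_def])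
  have hC : Commute (C c) x := Units.ext (Algebra.commutes _ _)
  calc f ↑(x ^ m) = ↑(Units.map (f : A →* A) (x ^ m)) := rfl
    _ = ↑(C (c ^ m) * x ^ m) := by rw [map_zpow, hx, hC.mul_zpow, map_zpow]
    _ = _ := by rw [Units.val_mul, Units.coe_map, Algebra.smul_def]; rfl

theorem List.prod_ofFn_zpow_smul {K A : Type*} [CommSemiring K] [Semiring A] [Algebra K A]
    {m : ℕ} (c : Kˣ) (e : Fin m → ℤ) (f : Fin m → A) :
    (List.ofFn fun j => ((c ^ e j : Kˣ) : K) • f j).prod =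
      ((c ^ ∑ j, e j : Kˣ) : K) • (List.ofFn f).prod := by
  induction m with
  | zero => simp
  | succ m ih =>
    rw [List.ofFn_succ, List.ofFn_succ, List.prod_cons, List.prod_cons, ih, Fin.sum_univ_succ,
      zpow_add, Units.val_mul, smul_mul_smul_comm]

theorem Commute.sum_range_pow_mul_pow_sub_mod_comm {A : Type*} [Semiring A] {x y : A}
    (h : Commute x y) (r : ℕ) : ∑ s ∈ Finset.range r, y ^ s * x ^ ((r - s) % r) =
      ∑ s ∈ Finset.range r, x ^ s * y ^ ((r - s) % r) := by
  have hinv : ∀ s < r, (r - (r - s) % r) % r = s := by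
    intro s hs
    rcases s.eq_zero_or_pos with rfl | hs0
    · simp
    · rw [Nat.mod_eq_of_lt (by omega : r - s < r), Nat.sub_sub_self hs.le, Nat.mod_eq_of_lt hs]
  refine Finset.sum_nbij' (fun s => (r - s) % r) (fun s => (r - s) % r) (fun s hs => ?_)
    (fun s hs => ?_) (fun s hs => hinv s (by simpa using hs))
    (fun s hs => hinv s (by simpa using hs)) (fun s hs => ?_)
  · simpa using Nat.mod_lt _ (by simp at hs; omega)
  · simpa using Nat.mod_lt _ (by simp at hs; omega)
  · rw [hinv s (by simpa using hs)]
    exact (h.symm.pow_pow _ _).eq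

end Generic

namespace AYHpaper

variable {r n : ℕ} {q : ℂ}

section Relations

theorem ayhπ_eq_of_rel {a b : FA n} (h : Rel r n q a b) : ayhπ r n q a = ayhπ r n q b :=
  RingQuot.mkAlgHom_rel ℂ h

theorem commute_g_g {i j : Fin (n - 1)} (h : i.1 + 2 ≤ j.1 ∨ j.1 + 2 ≤ i.1) :
    Commute (gEl r n q i) (gEl r n q j) := by
  show _ * _ = _ * _
  simpa [gEl] using ayhπ_eq_of_rel (Rel.gg (r := r) (q := q) h)

theorem g_braid {i j : Fin (n - 1)} (h : j.1 = i.1 + 1) :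
    gEl r n q i * gEl r n q j * gEl r n q i = gEl r n q j * gEl r n q i * gEl r n q j := by
  simpa [gEl] using ayhπ_eq_of_rel (Rel.braid (r := r) (q := q) h)

theorem commute_t_t (i j : Fin n) : Commute (tEl r n q i) (tEl r n q j) := by
  show _ * _ = _ * _
  simpa [tEl] using ayhπ_eq_of_rel (Rel.tt (r := r) (q := q) i j)

theorem g_mul_t (i : Fin (n - 1)) (j : Fin n) :
    gEl r n q i * tEl r n q j = tEl r n q (sAct i j) * gEl r n q i := by
  simpa [tEl, gEl] using ayhπ_eq_of_rel (Rel.gt (r := r) (q := q) i j)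

theorem t_pow (i : Fin n) : tEl r n q i ^ r = 1 := by
  simpa [tEl] using ayhπ_eq_of_rel (Rel.tpow (r := r) (q := q) i)

theorem g_sq (i : Fin (n - 1)) :
    gEl r n q i ^ 2 = 1 + (q - q⁻¹) • (eEl r n q i * gEl r n q i) := by
  simpa [gEl, eEl] using ayhπ_eq_of_rel (Rel.gsq (r := r) (q := q) i)

theorem X1_mul_X1inv : X1El r n q * X1invEl r n q = 1 := by
  simpa [X1El, X1invEl] using ayhπ_eq_of_rel (Rel.XXinv (r := r) (n := n) (q := q))

theorem X1inv_mul_X1 : X1invEl r n q * X1El r n q = 1 := by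
  simpa [X1El, X1invEl] using ayhπ_eq_of_rel (Rel.XinvX (r := r) (n := n) (q := q))

theorem g_X1_g_X1 (i : Fin (n - 1)) (h : i.1 = 0) :
    gEl r n q i * X1El r n q * gEl r n q i * X1El r n q =
      X1El r n q * gEl r n q i * X1El r n q * gEl r n q i := by
  simpa [X1El, gEl] using ayhπ_eq_of_rel (Rel.gXgX (r := r) (q := q) i h)

theorem commute_g_X1 (i : Fin (n - 1)) (h : 1 ≤ i.1) : Commute (gEl r n q i) (X1El r n q) := by
  show _ * _ = _ * _
  simpa [X1El, gEl] using ayhπ_eq_of_rel (Rel.gX (r := r) (q := q) i h)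

theorem commute_t_X1 (j : Fin n) : Commute (tEl r n q j) (X1El r n q) := by
  show _ * _ = _ * _
  simpa [X1El, tEl] using ayhπ_eq_of_rel (Rel.tX (r := r) (q := q) j)

theorem eEl_eq (i : Fin (n - 1)) : eEl r n q i = (r : ℂ)⁻¹ •
    ∑ s ∈ Finset.range r, tEl r n q (loFin i) ^ s * tEl r n q (hiFin i) ^ ((r - s) % r) := by
  simp [eEl, fe, tEl]

theorem algHom_ext {B : Type*} [Semiring B] [Algebra ℂ B] {f f' : AYH r n q →ₐ[ℂ] B}
    (ht : ∀ j, f (tEl r n q j) = f' (tEl r n q j))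
    (hg : ∀ i, f (gEl r n q i) = f' (gEl r n q i))
    (hX : f (X1El r n q) = f' (X1El r n q)) (hXinv : f (X1invEl r n q) = f' (X1invEl r n q)) :
    f = f' := by
  refine RingQuot.ringQuot_ext' ℂ _ _ (FreeAlgebra.hom_ext (funext fun v => ?_))
  cases v with
  | t j => exact ht j
  | g i => exact hg i
  | X => exact hX
  | Xinv => exact hXinv

theorem subalgebra_eq_top {S : Subalgebra ℂ (AYH r n q)} (ht : ∀ j, tEl r n q j ∈ S)
    (hg : ∀ i, gEl r n q i ∈ S) (hX : X1El r n q ∈ S) (hXinv : X1invEl r n q ∈ S) :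
    S = ⊤ := by
  rw [eq_top_iff]
  rintro a -
  obtain ⟨w, rfl⟩ := RingQuot.mkAlgHom_surjective ℂ (Rel r n q) a
  induction w using FreeAlgebra.induction with
  | grade0 c => simp
  | grade1 v =>
    cases v with
    | t j => exact ht j
    | g i => exact hg i
    | X => exact hX
    | Xinv => exact hXinv
  | mul a b ha hb => simpa using S.mul_mem ha hb
  | add a b ha hb => simpa using S.add_mem ha hb

end Relations

section Units

theorem commute_g_e (i : Fin (n - 1)) : Commute (gEl r n q i) (eEl r n q i) := by
  have hpow : ∀ (j : Fin n) (k : ℕ),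
      gEl r n q i * tEl r n q j ^ k = tEl r n q (sAct i j) ^ k * gEl r n q i :=
    fun j k => SemiconjBy.pow_right (g_mul_t i j) k
  have hg : ∀ s k, gEl r n q i * (tEl r n q (loFin i) ^ s * tEl r n q (hiFin i) ^ k) =
      tEl r n q (hiFin i) ^ s * tEl r n q (loFin i) ^ k * gEl r n q i := fun s k => by
    rw [← mul_assoc, hpow, mul_assoc, hpow, ← mul_assoc]
    simp [sAct, loFin, hiFin]
  show _ * _ = _ * _
  rw [eEl_eq, mul_smul_comm, smul_mul_assoc, Finset.mul_sum, Finset.sum_mul]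
  simp only [hg, ← Finset.sum_mul]
  rw [(commute_t_t _ _).sum_range_pow_mul_pow_sub_mod_comm]

theorem g_mul_gInv (i : Fin (n - 1)) : gEl r n q i * gInvEl r n q i = 1 := by
  rw [gInvEl, mul_sub, mul_smul_comm, (commute_g_e i).eq, ← sq, g_sq, add_sub_cancel_right]

theorem gInv_mul_g (i : Fin (n - 1)) : gInvEl r n q i * gEl r n q i = 1 := by
  rw [gInvEl, sub_mul, smul_mul_assoc, ← sq, g_sq, add_sub_cancel_right]

variable (r q) in
noncomputable def gUnit (i : Fin (n - 1)) : (AYH r n q)ˣ :=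
  ⟨gEl r n q i, gInvEl r n q i, g_mul_gInv i, gInv_mul_g i⟩

theorem Xseq_mul_XinvSeq (k : ℕ) :
    Xseq r n q k * XinvSeq r n q k = 1 ∧ XinvSeq r n q k * Xseq r n q k = 1 := by
  induction k with
  | zero => exact ⟨X1_mul_X1inv, X1inv_mul_X1⟩
  | succ k ih =>
    by_cases h : k < n - 1
    · let U : (AYH r n q)ˣ := gUnit r q ⟨k, h⟩ * ⟨_, _, ih.1, ih.2⟩ * gUnit r q ⟨k, h⟩
      simpa [Xseq, XinvSeq, h, U, gUnit, mul_assoc] using And.intro U.mul_inv U.inv_mul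
    · simpa [Xseq, XinvSeq, h] using ih

variable (r q) in
noncomputable def XUnit (j : Fin n) : (AYH r n q)ˣ :=
  ⟨XEl r n q j, XinvEl r n q j, (Xseq_mul_XinvSeq j).1, (Xseq_mul_XinvSeq j).2⟩

variable (r n q) in
noncomputable def X1Unit : (AYH r n q)ˣ :=
  ⟨X1El r n q, X1invEl r n q, X1_mul_X1inv, X1inv_mul_X1⟩

theorem XAzpow_eq (j : Fin n) (m : ℤ) : XAzpow r n q j m = ↑(XUnit r q j ^ m) := by
  unfold XAzpow
  split_ifs with h
  · obtain ⟨k, rfl⟩ := Int.eq_ofNat_of_zero_le h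
    simp [XUnit]
  · obtain ⟨k, rfl⟩ := Int.exists_eq_neg_ofNat (le_of_lt (not_le.mp h))
    simp [XUnit, ← inv_pow]
    rfl

theorem Xlam_eq (lam : Fin n → ℤ) :
    Xlam r n q lam = (List.ofFn fun j => (↑(XUnit r q j ^ lam j) : AYH r n q)).prod := by
  simp only [Xlam, XAzpow_eq]

theorem Xlam_cons_zero {m : ℕ} (a : ℤ) :
    Xlam r (m + 1) q (Fin.cons a 0) = ↑(XUnit r q (0 : Fin (m + 1)) ^ a) := by
  simp [Xlam_eq, List.ofFn_succ]

theorem Xlam_cons_cons_zero {m : ℕ} (a b : ℤ) :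
    Xlam r (m + 2) q (Fin.cons a (Fin.cons b 0)) =
      ↑(XUnit r q (0 : Fin (m + 2)) ^ a) * ↑(XUnit r q (1 : Fin (m + 2)) ^ b) := by
  simp [Xlam_eq, List.ofFn_succ]

theorem XEl_one_eq {i : Fin (n - 1)} (hi : i.1 = 0) :
    XEl r n q ⟨1, by omega⟩ = gEl r n q i * X1El r n q * gEl r n q i := by
  obtain ⟨i, hi'⟩ := i
  obtain rfl : i = 0 := hi
  show Xseq r n q (0 + 1) = _
  rw [Xseq, dif_pos hi']
  rfl

theorem XinvEl_one_eq {i : Fin (n - 1)} (hi : i.1 = 0) :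
    XinvEl r n q ⟨1, by omega⟩ = gInvEl r n q i * X1invEl r n q * gInvEl r n q i := by
  obtain ⟨i, hi'⟩ := i
  obtain rfl : i = 0 := hi
  show XinvSeq r n q (0 + 1) = _
  rw [XinvSeq, dif_pos hi']
  rfl

theorem commute_X1_Xseq (k : ℕ) : Commute (X1El r n q) (Xseq r n q k) := by
  induction k with
  | zero => exact Commute.refl _
  | succ k ih =>
    by_cases h : k < n - 1
    · rw [Xseq, dif_pos h]
      rcases k.eq_zero_or_pos with rfl | hk
      · have := g_X1_g_X1 (r := r) (q := q) ⟨0, h⟩ rfl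
        show _ * _ = _ * _
        simp only [Xseq, mul_assoc] at this ⊢
        exact this.symm
      · have hg := (commute_g_X1 (r := r) (q := q) ⟨k, h⟩ hk).symm
        exact (hg.mul_right ih).mul_right hg
    · rw [Xseq, dif_neg h]
      exact ih

theorem commute_X1_Xlam (lam : Fin n → ℤ) : Commute (X1El r n q) (Xlam r n q lam) := by
  rw [Xlam_eq]
  refine Commute.list_prod_right _ _ fun x hx => ?_
  obtain ⟨j, rfl⟩ := List.mem_ofFn.mp hx
  exact Commute.units_zpow_right (commute_X1_Xseq j) _

theorem commute_X1_e (i : Fin (n - 1)) : Commute (X1El r n q) (eEl r n q i) := by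
  rw [eEl_eq]
  exact (Commute.sum_right _ _ _ fun s _ => (((commute_t_X1 _).symm.pow_right _).mul_right
    ((commute_t_X1 _).symm.pow_right _))).smul_right _

theorem X1_mul_mul_X1inv_of_commute {a : AYH r n q} (h : Commute (X1El r n q) a) :
    X1El r n q * a * X1invEl r n q = a := by
  rw [h.eq, mul_assoc, X1_mul_X1inv, mul_one]

theorem X1inv_mul_mul_X1_of_commute {a : AYH r n q} (h : Commute (X1El r n q) a) :
    X1invEl r n q * a * X1El r n q = a := by
  rw [mul_assoc, ← h.eq, ← mul_assoc, X1inv_mul_X1, one_mul]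

end Units

section Scaling

variable (r n q) in
noncomputable def scaleGen (u : ℂˣ) : Gen n → AYH r n q
  | .t j => tEl r n q j
  | .g i => gEl r n q i
  | .X => (u : ℂ) • X1El r n q
  | .Xinv => ((u⁻¹ : ℂˣ) : ℂ) • X1invEl r n q

variable (r n q) in
noncomputable def scaleFA (u : ℂˣ) : FA n →ₐ[ℂ] AYH r n q :=
  FreeAlgebra.lift ℂ (scaleGen r n q u)

@[simp] theorem scaleFA_ft (u : ℂˣ) (j : Fin n) : scaleFA r n q u (ft j) = tEl r n q j := by
  simp [scaleFA, ft, scaleGen]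

@[simp] theorem scaleFA_fg (u : ℂˣ) (i : Fin (n - 1)) :
    scaleFA r n q u (fg i) = gEl r n q i := by
  simp [scaleFA, fg, scaleGen]

@[simp] theorem scaleFA_fX (u : ℂˣ) : scaleFA r n q u fX = (u : ℂ) • X1El r n q := by
  simp [scaleFA, fX, scaleGen]

@[simp] theorem scaleFA_fXinv (u : ℂˣ) :
    scaleFA r n q u fXinv = ((u⁻¹ : ℂˣ) : ℂ) • X1invEl r n q := by
  simp [scaleFA, fXinv, scaleGen]

@[simp] theorem scaleFA_fe (u : ℂˣ) (i : Fin (n - 1)) :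
    scaleFA r n q u (fe r i) = eEl r n q i := by
  simp [fe, eEl_eq]

theorem scaleFA_rel (u : ℂˣ) {a b : FA n} (h : Rel r n q a b) :
    scaleFA r n q u a = scaleFA r n q u b := by
  induction h with
  | gg h => simpa using (commute_g_g h).eq
  | braid h => simpa using g_braid h
  | tt i j => simpa using (commute_t_t i j).eq
  | gt i j => simpa using g_mul_t i j
  | tpow i => simpa using t_pow i
  | gsq i => simpa using g_sq i
  | XXinv => simp [X1_mul_X1inv]
  | XinvX => simp [X1inv_mul_X1]
  | gXgX i h => simpa [smul_mul_assoc, mul_smul_comm, smul_smul] using g_X1_g_X1 i h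
  | gX i h => simpa [smul_mul_assoc, mul_smul_comm] using (commute_g_X1 i h).eq
  | tX j => simpa [smul_mul_assoc, mul_smul_comm] using (commute_t_X1 j).eq

variable (r n q) in
noncomputable def scaleAlgHom (u : ℂˣ) : AYH r n q →ₐ[ℂ] AYH r n q :=
  RingQuot.liftAlgHom ℂ ⟨scaleFA r n q u, fun _ _ => scaleFA_rel u⟩

@[simp] theorem scaleAlgHom_t (u : ℂˣ) (j : Fin n) :
    scaleAlgHom r n q u (tEl r n q j) = tEl r n q j :=
  (RingQuot.liftAlgHom_mkAlgHom_apply ℂ _ _ _).trans (scaleFA_ft u j)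

@[simp] theorem scaleAlgHom_g (u : ℂˣ) (i : Fin (n - 1)) :
    scaleAlgHom r n q u (gEl r n q i) = gEl r n q i :=
  (RingQuot.liftAlgHom_mkAlgHom_apply ℂ _ _ _).trans (scaleFA_fg u i)

@[simp] theorem scaleAlgHom_X1 (u : ℂˣ) :
    scaleAlgHom r n q u (X1El r n q) = (u : ℂ) • X1El r n q :=
  (RingQuot.liftAlgHom_mkAlgHom_apply ℂ _ _ _).trans (scaleFA_fX u)

@[simp] theorem scaleAlgHom_X1inv (u : ℂˣ) :
    scaleAlgHom r n q u (X1invEl r n q) = ((u⁻¹ : ℂˣ) : ℂ) • X1invEl r n q :=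
  (RingQuot.liftAlgHom_mkAlgHom_apply ℂ _ _ _).trans (scaleFA_fXinv u)

variable (r n q) in
noncomputable def scaleAut : ℂˣ →* (AYH r n q ≃ₐ[ℂ] AYH r n q) :=
  (AlgEquiv.algHomUnitsEquiv _ _).toMonoidHom.comp
    { toFun := scaleAlgHom r n q
      map_one' := algHom_ext (by simp) (by simp) (by simp) (by simp)
      map_mul' := fun u v => algHom_ext (by simp) (by simp) (by simp [smul_smul, mul_comm])
        (by simp [smul_smul, mul_comm]) : ℂˣ →* (AYH r n q →ₐ[ℂ] AYH r n q) }.toHomUnits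

@[simp] theorem scaleAut_t (u : ℂˣ) (j : Fin n) :
    scaleAut r n q u (tEl r n q j) = tEl r n q j :=
  scaleAlgHom_t u j

@[simp] theorem scaleAut_g (u : ℂˣ) (i : Fin (n - 1)) :
    scaleAut r n q u (gEl r n q i) = gEl r n q i :=
  scaleAlgHom_g u i

@[simp] theorem scaleAut_X1 (u : ℂˣ) :
    scaleAut r n q u (X1El r n q) = (u : ℂ) • X1El r n q :=
  scaleAlgHom_X1 u

theorem scaleAut_XEl (u : ℂˣ) (j : Fin n) :
    scaleAut r n q u (XEl r n q j) = (u : ℂ) • XEl r n q j := by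
  suffices ∀ k, scaleAut r n q u (Xseq r n q k) = (u : ℂ) • Xseq r n q k from this j
  intro k
  induction k with
  | zero => exact scaleAut_X1 u
  | succ k ih =>
    by_cases h : k < n - 1
    · simp [Xseq, h, ih]
    · simpa [Xseq, h] using ih

theorem scaleAut_Xlam (u : ℂˣ) (lam : Fin n → ℤ) :
    scaleAut r n q u (Xlam r n q lam) = ((u ^ ∑ j, lam j : ℂˣ) : ℂ) • Xlam r n q lam := by
  have hX : ∀ j, scaleAut r n q u ↑(XUnit r q j ^ lam j) =
      ((u ^ lam j : ℂˣ) : ℂ) • ↑(XUnit r q j ^ lam j) := fun j =>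
    (scaleAut r n q u).toAlgHom.map_units_zpow_of_map_eq_smul (x := XUnit r q j)
      (scaleAut_XEl u j) _
  rw [Xlam_eq, map_list_prod, List.map_ofFn, Function.comp_def]
  simp only [hX]
  exact List.prod_ofFn_zpow_smul u lam _

variable (q) in
noncomputable def qCharFA : FA n →ₐ[ℂ] ℂ :=
  FreeAlgebra.lift ℂ fun
    | .g _ => q
    | _ => 1

theorem qCharFA_rel (hr : 0 < r) (hq0 : q ≠ 0) {a b : FA n} (h : Rel r n q a b) :
    qCharFA q a = qCharFA q b := by
  induction h with
  | gsq i =>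
    have hr' : (r : ℂ) ≠ 0 := by exact_mod_cast hr.ne'
    simp [qCharFA, fe, fg, ft, hr']
    field_simp
    ring
  | _ => simp [qCharFA, fg, ft, fX, fXinv, mul_comm]

theorem X1El_ne_zero (hr : 0 < r) (hq0 : q ≠ 0) : X1El r n q ≠ 0 := by
  intro h
  have := congrArg (RingQuot.liftAlgHom ℂ ⟨qCharFA q, fun _ _ => qCharFA_rel hr hq0⟩) h
  simp [X1El, ayhπ, qCharFA, fX] at this

theorem orderOf_scaleAut (hr : 0 < r) (hq0 : q ≠ 0) (u : ℂˣ) :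
    orderOf (scaleAut r n q u) = orderOf u := by
  refine orderOf_injective _ ((injective_iff_map_eq_one _).2 fun v hv => ?_) u
  have hX : (v : ℂ) • X1El r n q = (1 : ℂ) • X1El r n q := by
    simpa using congrArg (· (X1El r n q)) hv
  exact Units.ext (smul_left_injective ℂ (X1El_ne_zero hr hq0) hX)

end Scaling

section FixedPoints

variable {p : ℕ}

theorem t_mem_YpSub (j : Fin n) : tEl r n q j ∈ YpSub r n q p :=
  Algebra.subset_adjoin (Or.inr ⟨j, rfl⟩)

theorem g_mem_YpSub (i : Fin (n - 1)) : gEl r n q i ∈ YpSub r n q p :=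
  Algebra.subset_adjoin (Or.inl (Or.inr ⟨i, rfl⟩))

theorem Xlam_mem_YpSub {lam : Fin n → ℤ} (h : memLp n p lam) :
    Xlam r n q lam ∈ YpSub r n q p :=
  Algebra.subset_adjoin (Or.inl (Or.inl ⟨lam, h, rfl⟩))

theorem e_mem_YpSub (i : Fin (n - 1)) : eEl r n q i ∈ YpSub r n q p := by
  rw [eEl_eq]
  exact Subalgebra.smul_mem _ (sum_mem fun s _ =>
    mul_mem (pow_mem (t_mem_YpSub _) _) (pow_mem (t_mem_YpSub _) _)) _

theorem gInv_mem_YpSub (i : Fin (n - 1)) : gInvEl r n q i ∈ YpSub r n q p :=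
  sub_mem (g_mem_YpSub i) (Subalgebra.smul_mem _ (e_mem_YpSub i) _)

theorem X1Unit_zpow_mem_YpSub (hn : 0 < n) {m : ℤ} (hm : (p : ℤ) ∣ m) :
    ↑(X1Unit r n q ^ m) ∈ YpSub r n q p := by
  obtain ⟨k, rfl⟩ : ∃ k, n = k + 1 := ⟨n - 1, by omega⟩
  rw [show X1Unit r (k + 1) q = XUnit r q 0 from Units.ext rfl, ← Xlam_cons_zero]
  exact Xlam_mem_YpSub (by simpa [memLp] using hm)

theorem X1inv_mul_XEl_one_mem_YpSub (h : 1 < n) :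
    X1invEl r n q * XEl r n q ⟨1, h⟩ ∈ YpSub r n q p := by
  obtain ⟨m, rfl⟩ : ∃ m, n = m + 2 := ⟨n - 2, by omega⟩
  have := Xlam_mem_YpSub (r := r) (q := q) (p := p)
    (lam := (Fin.cons (-1) (Fin.cons 1 0) : Fin (m + 2) → ℤ)) (by simp [memLp])
  rwa [Xlam_cons_cons_zero, zpow_neg_one, zpow_one] at this

theorem X1_mul_XinvEl_one_mem_YpSub (h : 1 < n) :
    X1El r n q * XinvEl r n q ⟨1, h⟩ ∈ YpSub r n q p := by
  obtain ⟨m, rfl⟩ : ∃ m, n = m + 2 := ⟨n - 2, by omega⟩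
  have := Xlam_mem_YpSub (r := r) (q := q) (p := p)
    (lam := (Fin.cons 1 (Fin.cons (-1) 0) : Fin (m + 2) → ℤ)) (by simp [memLp])
  rwa [Xlam_cons_cons_zero, zpow_neg_one, zpow_one] at this

theorem X1inv_mul_g_mul_X1_mem_YpSub {i : Fin (n - 1)} (hi : i.1 = 0) :
    X1invEl r n q * gEl r n q i * X1El r n q ∈ YpSub r n q p := by
  have h1 : 1 < n := by omega
  have hconj : X1invEl r n q * gEl r n q i * X1El r n q =
      X1invEl r n q * XEl r n q ⟨1, h1⟩ * gInvEl r n q i := by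
    simp [XEl_one_eq hi, mul_assoc, g_mul_gInv]
  rw [hconj]
  exact mul_mem (X1inv_mul_XEl_one_mem_YpSub h1) (gInv_mem_YpSub i)

theorem X1_mul_g_mul_X1inv_mem_YpSub {i : Fin (n - 1)} (hi : i.1 = 0) :
    X1El r n q * gEl r n q i * X1invEl r n q ∈ YpSub r n q p := by
  have h1 : 1 < n := by omega
  have hconj : X1El r n q * gInvEl r n q i * X1invEl r n q =
      X1El r n q * XinvEl r n q ⟨1, h1⟩ * gEl r n q i := by
    simp [XinvEl_one_eq hi, mul_assoc, gInv_mul_g]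
  rw [← sub_add_cancel (gEl r n q i) ((q - q⁻¹) • eEl r n q i), ← gInvEl, mul_add, add_mul,
    mul_smul_comm, smul_mul_assoc, X1_mul_mul_X1inv_of_commute (commute_X1_e i), hconj]
  exact add_mem (mul_mem (X1_mul_XinvEl_one_mem_YpSub h1) (g_mem_YpSub i))
    (Subalgebra.smul_mem _ (e_mem_YpSub i) _)

theorem X1_mul_mul_X1inv_mem_YpSub {b : AYH r n q} (hb : b ∈ YpSub r n q p) :
    X1El r n q * b * X1invEl r n q ∈ YpSub r n q p := by
  refine Algebra.conj_mem_adjoin (X1Unit r n q) (fun a ha => ?_) hb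
  change X1El r n q * a * X1invEl r n q ∈ YpSub r n q p
  rcases ha with (⟨lam, hlam, rfl⟩ | ⟨i, rfl⟩) | ⟨j, rfl⟩
  · rw [X1_mul_mul_X1inv_of_commute (commute_X1_Xlam lam)]
    exact Xlam_mem_YpSub hlam
  · by_cases hi : i.1 = 0
    · exact X1_mul_g_mul_X1inv_mem_YpSub hi
    · rw [X1_mul_mul_X1inv_of_commute (commute_g_X1 i (by omega)).symm]
      exact g_mem_YpSub i
  · rw [X1_mul_mul_X1inv_of_commute (commute_t_X1 j).symm]
    exact t_mem_YpSub j

theorem X1inv_mul_mul_X1_mem_YpSub {b : AYH r n q} (hb : b ∈ YpSub r n q p) :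
    X1invEl r n q * b * X1El r n q ∈ YpSub r n q p := by
  have key := Algebra.conj_mem_adjoin (X1Unit r n q)⁻¹ ?_ hb
  · rw [inv_inv] at key
    exact key
  intro a ha
  change X1invEl r n q * a * X1El r n q ∈ YpSub r n q p
  rcases ha with (⟨lam, hlam, rfl⟩ | ⟨i, rfl⟩) | ⟨j, rfl⟩
  · rw [X1inv_mul_mul_X1_of_commute (commute_X1_Xlam lam)]
    exact Xlam_mem_YpSub hlam
  · by_cases hi : i.1 = 0
    · exact X1inv_mul_g_mul_X1_mem_YpSub hi
    · rw [X1inv_mul_mul_X1_of_commute (commute_g_X1 i (by omega)).symm]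
      exact g_mem_YpSub i
  · rw [X1inv_mul_mul_X1_of_commute (commute_t_X1 j).symm]
    exact t_mem_YpSub j

theorem adjoin_YpSub_X1_eq_top :
    Algebra.adjoin ℂ ((YpSub r n q p : Set (AYH r n q)) ∪ {X1El r n q, X1invEl r n q}) = ⊤ :=
  subalgebra_eq_top (fun j => Algebra.subset_adjoin (Or.inl (t_mem_YpSub j)))
    (fun i => Algebra.subset_adjoin (Or.inl (g_mem_YpSub i)))
    (Algebra.subset_adjoin (Or.inr (Or.inl rfl))) (Algebra.subset_adjoin (Or.inr (Or.inr rfl)))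

theorem scaleAut_apply_of_mem_YpSub {u : ℂˣ} (hu : u ^ p = 1) {a : AYH r n q}
    (ha : a ∈ YpSub r n q p) : scaleAut r n q u a = a := by
  suffices h : YpSub r n q p ≤ AlgHom.equalizer (scaleAut r n q u).toAlgHom (AlgHom.id ℂ _) from
    h ha
  refine Algebra.adjoin_le ?_
  rintro _ ((⟨lam, ⟨c, hc⟩, rfl⟩ | ⟨i, rfl⟩) | ⟨j, rfl⟩)
  · show scaleAut r n q u (Xlam r n q lam) = Xlam r n q lam
    rw [scaleAut_Xlam, hc, zpow_mul, zpow_natCast, hu, one_zpow, Units.val_one, one_smul]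
  · exact scaleAut_g u i
  · exact scaleAut_t u j

theorem mem_YpSub_of_scaleAut_apply_eq_self (hn : 0 < n) (hp : 0 < p) {u : ℂˣ}
    (hu : IsPrimitiveRoot u p) {a : AYH r n q} (ha : scaleAut r n q u a = a) :
    a ∈ YpSub r n q p := by
  have hspan := Units.span_zpow_mul_eq_top (X1Unit r n q) (B := YpSub r n q p)
    (fun _ => X1inv_mul_mul_X1_mem_YpSub) (fun _ => X1_mul_mul_X1inv_mem_YpSub)
    adjoin_YpSub_X1_eq_top
  refine Submodule.mem_of_apply_eq_self_of_span_eigenvectors (scaleAut r n q u).toLinearMap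
    (S := Subalgebra.toSubmodule (YpSub r n q p)) (by exact_mod_cast hp.ne') hspan ?_ ha
  rintro _ ⟨m, b, hb, rfl⟩
  refine ⟨↑(u ^ m), ?_, ?_, fun h1 => ?_⟩
  · have hX := (scaleAut r n q u).toAlgHom.map_units_zpow_of_map_eq_smul
      (x := X1Unit r n q) (scaleAut_X1 u) m
    change scaleAut r n q u _ = _ at hX ⊢
    rw [map_mul, hX, scaleAut_apply_of_mem_YpSub hu.pow_eq_one hb, smul_mul_assoc]
  · rw [← Units.val_pow_eq_pow_val, ← zpow_natCast, ← zpow_mul, mul_comm, zpow_mul,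
      zpow_natCast, hu.pow_eq_one, one_zpow, Units.val_one]
  · have hm : (p : ℤ) ∣ m := (hu.zpow_eq_one_iff_dvd m).mp (Units.ext h1)
    exact (YpSub r n q p).mul_mem (X1Unit_zpow_mem_YpSub hn hm) hb

end FixedPoints

end AYHpaper

open AYHpaper in
theorem exists_automorphism_fixed_points_Yp_general
    (r n p : ℕ) (hr : 0 < r) (hn : 0 < n) (hp : 0 < p)
    (q : ℂ) (hq0 : q ≠ 0) :
    ∃ σ : AYH r n q ≃ₐ[ℂ] AYH r n q,
      σ (X1El r n q) = ζp p • X1El r n q ∧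
      (∀ i : Fin (n - 1), σ (gEl r n q i) = gEl r n q i) ∧
      (∀ j : Fin n, σ (tEl r n q j) = tEl r n q j) ∧
      orderOf σ = p ∧
      ∀ a : AYH r n q, σ a = a ↔ a ∈ YpSub r n q p := by
  set ζ : ℂˣ := Units.mk0 (ζp p) (Complex.exp_ne_zero _)
  have hζ : IsPrimitiveRoot ζ p :=
    IsPrimitiveRoot.coe_units_iff.mp (Complex.isPrimitiveRoot_exp p hp.ne')
  refine ⟨scaleAut r n q ζ, scaleAut_X1 ζ, scaleAut_g ζ, scaleAut_t ζ, ?_, fun a =>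
    ⟨mem_YpSub_of_scaleAut_apply_eq_self hn hp hζ,
      scaleAut_apply_of_mem_YpSub hζ.pow_eq_one⟩⟩
  rw [orderOf_scaleAut hr hq0, ← hζ.eq_orderOf]

open AYHpaper in
/-- **Theorem 4.7**: the assignment `σ(X_1) = ζ_p X_1`, `σ(g_i) = g_i`,
`σ(t_j) = t_j` extends to an algebra automorphism of `Ŷ_{r,n}(q)` of order `p`, so
that `ℤ/pℤ = {1, σ, …, σ^{p-1}}` acts on `Ŷ_{r,n}(q)`; the fixed-point subalgebra of
this action is exactly `Ŷ^p_{r,n}(q)`. -/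
theorem exists_automorphism_fixed_points_Yp
    (r n p : ℕ) (hr : 0 < r) (hn : 0 < n) (hp : 0 < p)
    (q : ℂ) (hq0 : q ≠ 0) (hq : ∀ m : ℕ, 0 < m → q ^ m ≠ 1) :
    ∃ σ : AYH r n q ≃ₐ[ℂ] AYH r n q,
      σ (X1El r n q) = ζp p • X1El r n q ∧
      (∀ i : Fin (n - 1), σ (gEl r n q i) = gEl r n q i) ∧
      (∀ j : Fin n, σ (tEl r n q j) = tEl r n q j) ∧
      orderOf σ = p ∧
      ∀ a : AYH r n q, σ a = a ↔ a ∈ YpSub r n q p :=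
  exists_automorphism_fixed_points_Yp_general r n p hr hn hp q hq0
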